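/- arXiv:1707.04351 — 2 statements merged into one kernel-verified Lean document; each statement's English description precedes it below -/
import Mathlib

section
/- For every integer r ≥ 1 and every integer n ≥ 2, N(n,r,0) = 2·N(n-1,r,0) - N(n-r,r,0) + N(n-r-1,r,0), where by convention N(m,r,0) = 0 for every negative integer m. -/
/-- The list of maximal runs of a binary word. -/
def runs (w : List Bool) : List (List Bool) := w.splitBy (· == ·)

/-- The number of maximal runs of length `r` in a binary word. -/
def runCount (w : List Bool) (r : ℕ) : ℕ :=
  ((runs w).filter (fun g => g.length = r)).length

/-- The number of maximal runs of 1s of length `r` in a binary word. -/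
def oneRunCount (w : List Bool) (r : ℕ) : ℕ :=
  ((runs w).filter (fun g => g.length = r ∧ g.head? = some true)).length

/-- `N n r k`: the number of binary words of length `n` that begin with `0`
(the empty word counts when `n = 0`) and contain exactly `k` maximal runs of length `r`. -/
def N (n r k : ℕ) : ℕ :=
  Fintype.card {w : Fin n → Bool //
    (List.ofFn w).head? ≠ some true ∧ runCount (List.ofFn w) r = k}

/-- `M n r k`: the number of binary words of length `n` that begin with `0`
and contain exactly `k` maximal runs of 1s of length `r`. -/
def M (n r k : ℕ) : ℕ :=
  Fintype.card {w : Fin n → Bool //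
    (List.ofFn w).head? ≠ some true ∧ oneRunCount (List.ofFn w) r = k}

/-- `N` extended to integer lengths, vanishing for negative lengths. -/
def Nz (m : ℤ) (r k : ℕ) : ℤ := if 0 ≤ m then (N m.toNat r k : ℤ) else 0

open List

/-! A nonempty word that starts with `c` and has no maximal run of length `r` factors uniquely as
`c^(j+1) t` with `j + 1 ≠ r` and `t` a word of the same kind not starting with `c`. Together with
the symmetry `c ↔ !c` this gives `N(n+1) = ∑_{j ≤ n, j+1 ≠ r} N(n-j)`. Over `ℤ`, with `N` vanishing
at negative lengths, the excluded term `j = r - 1` is exactly `N(n+1-r)`, so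
`N(n+1) = ∑_{m ≤ n} N(m) - N(n+1-r)`; subtracting this identity at `n` from the one at `n + 1`
gives the recursion. -/

theorem runs_replicate_append {c : Bool} {t : List Bool} (ht : t.head? ≠ some c) (j : ℕ) :
    runs (replicate (j + 1) c ++ t) = replicate (j + 1) c :: runs t := by
  rw [runs, splitBy_append, splitBy_of_isChain (by simp) (isChain_replicate_of_rel _ (by simp))]
  · rfl
  · intro x hx y hy
    rw [getLast?_replicate, if_neg (by omega), Option.mem_some_iff] at hx
    subst hx
    have : c ≠ y := fun h => ht (h ▸ hy)
    simpa using this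

theorem runCount_replicate_append {c : Bool} {t : List Bool} (ht : t.head? ≠ some c) (j r : ℕ) :
    runCount (replicate (j + 1) c ++ t) r = (if j + 1 = r then 1 else 0) + runCount t r := by
  rw [runCount, runs_replicate_append ht, filter_cons]
  split_ifs <;> simp_all [runCount, Nat.add_comm]

theorem replicate_append_inj {c : Bool} {t t' : List Bool} (ht : t.head? ≠ some c)
    (ht' : t'.head? ≠ some c) {j j' : ℕ}
    (h : replicate (j + 1) c ++ t = replicate (j' + 1) c ++ t') : j = j' ∧ t = t' := by
  have hruns := congrArg runs h
  rw [runs_replicate_append ht, runs_replicate_append ht', cons.injEq] at hruns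
  obtain ⟨hj, -⟩ := hruns
  have hj' : j = j' := by simpa using congrArg length hj
  subst hj'
  exact ⟨rfl, append_cancel_left h⟩

theorem List.exists_eq_replicate_append {α : Type*} {c : α} :
    ∀ {l : List α}, l.head? = some c →
      ∃ j t, t.head? ≠ some c ∧ l = replicate (j + 1) c ++ t
  | [], h => by simp at h
  | a :: l, h => by
    obtain rfl : a = c := by simpa using h
    by_cases hl : l.head? = some a
    · obtain ⟨j, t, ht, rfl⟩ := exists_eq_replicate_append hl
      exact ⟨j + 1, t, ht, rfl⟩
    · exact ⟨0, l, hl, rfl⟩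

def words (n : ℕ) : Finset (List Bool) :=
  Finset.univ.image (List.ofFn : (Fin n → Bool) → List Bool)

@[simp]
theorem mem_words {n : ℕ} {l : List Bool} : l ∈ words n ↔ l.length = n := by
  refine ⟨?_, fun h => Finset.mem_image.2 ⟨fun i => l[i], Finset.mem_univ _, ?_⟩⟩
  · simp only [words, Finset.mem_image]
    rintro ⟨w, -, rfl⟩
    exact length_ofFn
  · subst h; exact ofFn_getElem

theorem card_subtype_ofFn (n : ℕ) (p : List Bool → Prop) [DecidablePred p] :
    Fintype.card {w : Fin n → Bool // p (List.ofFn w)} = ((words n).filter p).card := by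
  rw [Fintype.card_subtype, words, Finset.filter_image,
    Finset.card_image_of_injective _ ofFn_injective]

def wordsAvoidingRun (r : ℕ) (c : Bool) (n : ℕ) : Finset (List Bool) :=
  (words n).filter fun l => l.head? ≠ some c ∧ runCount l r = 0

theorem card_wordsAvoidingRun_succ (r : ℕ) (c : Bool) (n : ℕ) :
    (wordsAvoidingRun r c (n + 1)).card
      = ∑ j ∈ (Finset.range (n + 1)).filter (· + 1 ≠ r),
          (wordsAvoidingRun r (!c) (n - j)).card := by
  rw [← Finset.card_sigma]
  symm
  refine Finset.card_bij (fun p _ => replicate (p.1 + 1) (!c) ++ p.2) ?_ ?_ ?_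
  · rintro ⟨j, t⟩ hp
    simp only [Finset.mem_sigma, Finset.mem_filter, Finset.mem_range, wordsAvoidingRun,
      mem_words] at hp ⊢
    obtain ⟨⟨hj, hjr⟩, hlen, ht, hrun⟩ := hp
    refine ⟨by simp; omega, by cases c <;> simp [replicate_succ], ?_⟩
    rw [runCount_replicate_append ht, if_neg hjr, hrun]
  · rintro ⟨j, t⟩ hp ⟨j', t'⟩ hp' h
    simp only [Finset.mem_sigma, wordsAvoidingRun, Finset.mem_filter] at hp hp'
    obtain ⟨rfl, rfl⟩ := replicate_append_inj hp.2.2.1 hp'.2.2.1 h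
    rfl
  · intro l hl
    simp only [wordsAvoidingRun, Finset.mem_filter, mem_words] at hl
    obtain ⟨hlen, hc, hrun⟩ := hl
    have hl : l.head? = some (!c) := by
      cases l with
      | nil => simp at hlen
      | cons a l => cases a <;> cases c <;> simp_all
    obtain ⟨j, t, ht, rfl⟩ := List.exists_eq_replicate_append hl
    rw [runCount_replicate_append ht] at hrun
    have hjr : j + 1 ≠ r := by rintro rfl; simp at hrun
    rw [if_neg hjr, zero_add] at hrun
    rw [length_append, length_replicate] at hlen
    refine ⟨⟨j, t⟩, ?_, rfl⟩
    simp only [Finset.mem_sigma, Finset.mem_filter, Finset.mem_range, wordsAvoidingRun,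
      mem_words]
    exact ⟨⟨by omega, hjr⟩, by omega, ht, hrun⟩

theorem wordsAvoidingRun_zero (r : ℕ) (c : Bool) : wordsAvoidingRun r c 0 = {[]} := by
  ext l
  simp only [wordsAvoidingRun, Finset.mem_filter, mem_words, length_eq_zero_iff,
    Finset.mem_singleton, and_iff_left_iff_imp]
  rintro rfl
  simp [runCount, runs]

-- Both counts satisfy the same recursion from the same initial value, so no complementation
-- bijection is needed.
theorem card_wordsAvoidingRun_not (r : ℕ) (c : Bool) (n : ℕ) :
    (wordsAvoidingRun r (!c) n).card = (wordsAvoidingRun r c n).card := by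
  induction n using Nat.strong_induction_on generalizing c with
  | _ n ih =>
    cases n with
    | zero => simp only [wordsAvoidingRun_zero]
    | succ n =>
      rw [card_wordsAvoidingRun_succ, card_wordsAvoidingRun_succ, Bool.not_not]
      exact Finset.sum_congr rfl fun j _ => (ih (n - j) (by omega) c).symm

theorem N_zero_eq_card_wordsAvoidingRun (n r : ℕ) : N n r 0 = (wordsAvoidingRun r true n).card :=
  card_subtype_ofFn n fun l => l.head? ≠ some true ∧ runCount l r = 0

theorem N_succ_zero_eq_sum (r n : ℕ) :
    N (n + 1) r 0 = ∑ j ∈ (Finset.range (n + 1)).filter (· + 1 ≠ r), N (n - j) r 0 := by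
  rw [N_zero_eq_card_wordsAvoidingRun, card_wordsAvoidingRun_succ]
  exact Finset.sum_congr rfl fun j _ => by
    rw [card_wordsAvoidingRun_not, N_zero_eq_card_wordsAvoidingRun]

@[simp]
theorem Nz_natCast (m r k : ℕ) : Nz m r k = N m r k := by
  simp [Nz]

theorem Nz_succ_zero_eq_sum_sub {r : ℕ} (hr : 1 ≤ r) (n : ℕ) :
    Nz (n + 1) r 0 = ∑ j ∈ Finset.range (n + 1), Nz (n - j) r 0 - Nz (n + 1 - r) r 0 := by
  have hsum : ∑ j ∈ Finset.range (n + 1), (if j = r - 1 then Nz (n - j) r 0 else 0)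
      = Nz (n + 1 - r) r 0 := by
    simp only [Finset.sum_ite_eq', Finset.mem_range]
    split_ifs with h
    · congr 1; omega
    · rw [Nz, if_neg (by omega)]
  have hNz : Nz (n + 1) r 0 = N (n + 1) r 0 := by exact_mod_cast Nz_natCast (n + 1) r 0
  rw [hNz, N_succ_zero_eq_sum, Finset.sum_filter, ← hsum, eq_sub_iff_add_eq]
  push_cast
  rw [← Finset.sum_add_distrib]
  refine Finset.sum_congr rfl fun j hjn => ?_
  have hNzj : Nz (n - j) r 0 = N (n - j) r 0 := by
    rw [← Nz_natCast]; congr 1; simp at hjn; omega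
  split_ifs <;> omega

/-- for `n ≥ 2`,
`N(n,r,0) = 2 N(n-1,r,0) - N(n-r,r,0) + N(n-r-1,r,0)`, with the convention
that `N` vanishes at negative lengths. -/
theorem N_recursion (r : ℕ) (hr : 1 ≤ r) (n : ℤ) (hn : 2 ≤ n) :
    Nz n r 0 = 2 * Nz (n - 1) r 0 - Nz (n - r) r 0 + Nz (n - r - 1) r 0 := by
  obtain ⟨m, rfl⟩ : ∃ m : ℕ, n = m + 2 := ⟨(n - 2).toNat, by omega⟩
  have hprev := Nz_succ_zero_eq_sum_sub hr m
  have hcurr := Nz_succ_zero_eq_sum_sub hr (m + 1)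
  rw [Finset.sum_range_succ'] at hcurr
  push_cast at hcurr
  have hshift : ∑ j ∈ Finset.range (m + 1), Nz ((m : ℤ) + 1 - (j + 1)) r 0
      = ∑ j ∈ Finset.range (m + 1), Nz (m - j) r 0 :=
    Finset.sum_congr rfl fun j _ => by ring_nf
  rw [hshift] at hcurr
  ring_nf at hprev hcurr ⊢
  linarith
end

section
/- For every integer n ≥ 0 there exists a bijection γ from the set of binary words of length n that begin with 0 to itself such that, for all integers r ≥ 1 and k ≥ 0 and every such word w, the word w contains exactly k maximal runs of length r + 1 if and only if γ(w) contains exactly k maximal runs of 1s of length r. (γ replaces the i-th maximal run of w by a block of the same length consisting of a 0 followed by 1s.) -/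
open List

namespace List

variable {α : Type*} {r : α → α → Bool}

theorem splitBy_cons_cons_of_rel {a b : α} (l : List α) (h : r a b) :
    (a :: b :: l).splitBy r = ((b :: l).splitBy r).modifyHead (a :: ·) := by
  obtain ⟨g, gs, hS⟩ : ∃ g gs, (b :: l).splitBy r = g :: gs :=
    List.exists_cons_of_ne_nil (splitBy_ne_nil.2 (cons_ne_nil b l))
  have hg : g ≠ [] := ne_nil_of_mem_splitBy (hS ▸ mem_cons_self)
  have hgb : g.head hg = b := by
    simpa [hS] using head_head_splitBy r (cons_ne_nil b l)
  have hflat := flatten_splitBy r (b :: l)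
  have hnil := nil_notMem_splitBy r (b :: l)
  have hmem : ∀ m ∈ g :: gs, m.IsChain fun x y ↦ r x y := fun m hm ↦
    isChain_of_mem_splitBy (hS ▸ hm)
  have hchain := isChain_getLast_head_splitBy r (b :: l)
  rw [hS] at hflat hnil hchain
  rw [hS, modifyHead_cons, splitBy_eq_iff]
  refine ⟨by simp [← hflat], by simp_all, ?_, ?_⟩
  · simp only [mem_cons, forall_eq_or_imp] at hmem ⊢
    refine ⟨isChain_cons.2 ⟨?_, hmem.1⟩, hmem.2⟩
    rw [head?_eq_some_head hg, hgb]
    simpa using h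
  · rw [isChain_cons] at hchain ⊢
    refine ⟨fun y hy ↦ ?_, hchain.2⟩
    obtain ⟨_, hy', hrel⟩ := hchain.1 y hy
    exact ⟨cons_ne_nil a g, hy', by rwa [getLast_cons hg]⟩

theorem splitBy_replicate_append {a : α} (ha : r a a) {k : ℕ} (hk : k ≠ 0) {l : List α}
    (hl : ∀ b ∈ l.head?, r a b = false) :
    (replicate k a ++ l).splitBy r = replicate k a :: l.splitBy r := by
  rw [splitBy_append, splitBy_of_isChain (by simpa using hk) (isChain_replicate_of_rel k ha),
    singleton_append]
  simpa [getLast?_replicate, hk] using hl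

end List

theorem runs_replicate_append_s10 {b : Bool} {k : ℕ} (hk : k ≠ 0) {w : List Bool}
    (hw : w.head? ≠ some b) : runs (replicate k b ++ w) = replicate k b :: runs w :=
  splitBy_replicate_append (beq_self_eq_true b) hk fun _ hc ↦
    beq_eq_false_iff_ne.2 fun h ↦ hw (h ▸ hc)

theorem runCount_eq_count (w : List Bool) (r : ℕ) :
    runCount w r = ((runs w).map length).count r := by
  rw [runCount, count, countP_map, countP_eq_length_filter]
  simp only [Function.comp_def, _root_.beq_eq_decide]

def alternatingWord : Bool → List ℕ → List Bool
  | _, [] => []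
  | b, l :: ls => replicate l b ++ alternatingWord (!b) ls

section alternatingWord

variable {b : Bool} {ls : List ℕ}

theorem length_alternatingWord : (alternatingWord b ls).length = ls.sum := by
  induction ls generalizing b <;> simp [alternatingWord, *]

theorem head?_alternatingWord_ne (hls : ∀ l ∈ ls, 0 < l) :
    (alternatingWord b ls).head? ≠ some !b := by
  cases ls with
  | nil => simp [alternatingWord]
  | cons l ls =>
    obtain ⟨l, rfl⟩ := Nat.exists_eq_add_one_of_ne_zero (hls l mem_cons_self).ne'
    simp [alternatingWord, replicate_succ]

theorem map_length_runs_alternatingWord (hls : ∀ l ∈ ls, 0 < l) :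
    (runs (alternatingWord b ls)).map length = ls := by
  induction ls generalizing b with
  | nil => rfl
  | cons l ls ih =>
    have hls' : ∀ l ∈ ls, 0 < l := fun l hl ↦ hls l (mem_cons_of_mem _ hl)
    have hhead := head?_alternatingWord_ne (b := !b) hls'
    rw [Bool.not_not] at hhead
    rw [alternatingWord, runs_replicate_append_s10 (hls l mem_cons_self).ne' hhead, map_cons,
      length_replicate, ih hls']

theorem runCount_alternatingWord (hls : ∀ l ∈ ls, 0 < l) (r : ℕ) :
    runCount (alternatingWord b ls) r = ls.count r := by
  rw [runCount_eq_count, map_length_runs_alternatingWord hls]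

theorem alternatingWord_succ_cons (l : ℕ) :
    alternatingWord b ((l + 1) :: ls) = b :: alternatingWord b (l :: ls) :=
  rfl

theorem exists_alternatingWord_eq (w : List Bool) (b : Bool) (hw : w.head? ≠ some !b) :
    ∃ ls, (∀ l ∈ ls, 0 < l) ∧ alternatingWord b ls = w := by
  induction w generalizing b with
  | nil => exact ⟨[], by simp, rfl⟩
  | cons c t ih =>
    obtain rfl : c = b := by simpa using hw
    by_cases ht : t.head? = some c
    · obtain ⟨_ | ⟨l, ls⟩, hls, h⟩ := ih c (by simp [ht])
      · simp [← h, alternatingWord] at ht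
      · refine ⟨(l + 1) :: ls, ?_, by rw [alternatingWord_succ_cons, h]⟩
        simpa using (forall_mem_cons.1 hls).2
    · obtain ⟨ls, hls, h⟩ := ih (!c) (by simpa using ht)
      exact ⟨1 :: ls, by simpa using hls, by simp [alternatingWord, h]⟩

theorem bijOn_alternatingWord :
    Set.BijOn (alternatingWord false) {ls | ∀ l ∈ ls, 0 < l} {w | w.head? ≠ some true} := by
  refine ⟨fun ls hls ↦ head?_alternatingWord_ne hls, fun ls₁ h₁ ls₂ h₂ h ↦ ?_,
    fun w hw ↦ exists_alternatingWord_eq w false hw⟩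
  rw [← map_length_runs_alternatingWord (b := false) h₁, h,
    map_length_runs_alternatingWord h₂]

end alternatingWord

def blockWord (ls : List ℕ) : List Bool :=
  ls.flatMap fun l => false :: replicate (l - 1) true

section blockWord

variable {ls : List ℕ}

theorem blockWord_cons (l : ℕ) :
    blockWord (l :: ls) = false :: (replicate (l - 1) true ++ blockWord ls) :=
  rfl

theorem length_blockWord (hls : ∀ l ∈ ls, 0 < l) : (blockWord ls).length = ls.sum := by
  induction ls with
  | nil => rfl
  | cons l ls ih =>
    rw [forall_mem_cons] at hls
    simp only [blockWord_cons, length_cons, length_append, length_replicate, ih hls.2, sum_cons]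
    omega

theorem head?_blockWord_ne : (blockWord ls).head? ≠ some true := by
  cases ls <;> simp [blockWord]

theorem splitBy_blockWord :
    (blockWord ls).splitBy (fun _ c ↦ c) = ls.map fun l ↦ false :: replicate (l - 1) true := by
  rw [splitBy_eq_iff]
  refine ⟨by simp [blockWord, flatMap], by simp, ?_, ?_⟩
  · simp [isChain_cons, isChain_replicate_of_rel, head?_replicate]
  · rw [isChain_map]
    exact Pairwise.isChain (pairwise_of_forall (by simp))

theorem map_length_splitBy_blockWord (hls : ∀ l ∈ ls, 0 < l) :
    ((blockWord ls).splitBy (fun _ c ↦ c)).map length = ls := by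
  rw [splitBy_blockWord, map_map]
  conv_rhs => rw [← map_id ls]
  refine map_congr_left fun l hl ↦ ?_
  have := hls l hl
  simp only [Function.comp_apply, length_cons, length_replicate, id_eq]
  omega

theorem exists_replicate_append_blockWord_eq (w : List Bool) :
    ∃ m ls, (∀ l ∈ ls, 0 < l) ∧ replicate m true ++ blockWord ls = w := by
  induction w with
  | nil => exact ⟨0, [], by simp, rfl⟩
  | cons c t ih =>
    obtain ⟨m, ls, hls, rfl⟩ := ih
    cases c
    · exact ⟨0, (m + 1) :: ls, by simpa using hls, by simp [blockWord_cons]⟩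
    · exact ⟨m + 1, ls, hls, by simp [replicate_succ]⟩

theorem exists_blockWord_eq (w : List Bool) (hw : w.head? ≠ some true) :
    ∃ ls, (∀ l ∈ ls, 0 < l) ∧ blockWord ls = w := by
  obtain ⟨_ | m, ls, hls, rfl⟩ := exists_replicate_append_blockWord_eq w
  · exact ⟨ls, hls, rfl⟩
  · simp [replicate_succ] at hw

theorem bijOn_blockWord :
    Set.BijOn blockWord {ls | ∀ l ∈ ls, 0 < l} {w | w.head? ≠ some true} := by
  refine ⟨fun _ _ ↦ head?_blockWord_ne, fun ls₁ h₁ ls₂ h₂ h ↦ ?_,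
    fun w hw ↦ exists_blockWord_eq w hw⟩
  rw [← map_length_splitBy_blockWord h₁, h, map_length_splitBy_blockWord h₂]

theorem oneRunCount_false_cons (w : List Bool) (r : ℕ) :
    oneRunCount (false :: w) r = oneRunCount w r := by
  rcases w with _ | ⟨_ | _, t⟩
  · rw [oneRunCount, oneRunCount, show runs [false] = [[false]] from rfl]
    simp [runs]
  · obtain ⟨g, gs, hS⟩ : ∃ g gs, (false :: t).splitBy (· == ·) = g :: gs :=
      exists_cons_of_ne_nil (splitBy_ne_nil.2 (cons_ne_nil _ _))
    have hg : g.head? = some false := by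
      have hg : g ≠ [] := ne_nil_of_mem_splitBy (hS ▸ mem_cons_self)
      rw [head?_eq_some_head hg]
      simpa [hS] using head_head_splitBy (· == ·) (cons_ne_nil false t)
    rw [oneRunCount, oneRunCount, runs, runs, splitBy_cons_cons_of_rel t rfl, hS]
    simp [hg]
  · rw [oneRunCount, oneRunCount, show runs (false :: true :: t) = [false] :: runs (true :: t)
      from runs_replicate_append_s10 one_ne_zero (by simp)]
    simp

theorem oneRunCount_replicate_true_append {r : ℕ} (hr : r ≠ 0) (m : ℕ) {w : List Bool}
    (hw : w.head? ≠ some true) :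
    oneRunCount (replicate m true ++ w) r = oneRunCount w r + if m = r then 1 else 0 := by
  rcases Nat.eq_zero_or_pos m with rfl | hm
  · simp [Ne.symm hr]
  · rw [oneRunCount, oneRunCount, runs_replicate_append_s10 hm.ne' hw, filter_cons]
    by_cases hmr : m = r <;> simp [hmr, hr, head?_replicate, hm.ne']

theorem oneRunCount_blockWord {r : ℕ} (hr : r ≠ 0) :
    oneRunCount (blockWord ls) r = ls.count (r + 1) := by
  induction ls with
  | nil => rfl
  | cons l ls ih =>
    rw [blockWord_cons, oneRunCount_false_cons,
      oneRunCount_replicate_true_append hr _ head?_blockWord_ne, ih, count_cons]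
    grind

end blockWord

abbrev ZeroStartWord (n : ℕ) := {w : List Bool // w.length = n ∧ w.head? ≠ some true}

noncomputable def Composition.equivZeroStartWord (encode : List ℕ → List Bool)
    (hbij : Set.BijOn encode {ls | ∀ l ∈ ls, 0 < l} {w | w.head? ≠ some true})
    (hlen : ∀ ls, (∀ l ∈ ls, 0 < l) → (encode ls).length = ls.sum) (n : ℕ) :
    Composition n ≃ ZeroStartWord n :=
  Equiv.ofBijective
    (fun c ↦ ⟨encode c.blocks, by rw [hlen _ fun _ ↦ c.blocks_pos, c.blocks_sum],
      hbij.mapsTo fun _ ↦ c.blocks_pos⟩)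
    ⟨fun c₁ c₂ h ↦ Composition.ext <|
        hbij.injOn (fun _ ↦ c₁.blocks_pos) (fun _ ↦ c₂.blocks_pos) (congrArg Subtype.val h),
      fun w ↦ by
        obtain ⟨ls, hls, hw⟩ := hbij.surjOn w.2.2
        exact ⟨⟨ls, hls _, by rw [← hlen ls hls, hw, w.2.1]⟩, Subtype.ext hw⟩⟩

/-- there is a bijection `γ` on the binary words of length `n`
beginning with `0` such that `w` has exactly `k` maximal runs of length `r+1`
iff `γ w` has exactly `k` maximal runs of 1s of length `r`. -/
theorem exists_run_coding_equiv (n : ℕ) :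
    ∃ γ : {w : List Bool // w.length = n ∧ w.head? ≠ some true} ≃
          {w : List Bool // w.length = n ∧ w.head? ≠ some true},
      ∀ r k : ℕ, 1 ≤ r →
        ∀ w : {w : List Bool // w.length = n ∧ w.head? ≠ some true},
          runCount w.val (r + 1) = k ↔ oneRunCount (γ w).val r = k := by
  let runEquiv := Composition.equivZeroStartWord _ bijOn_alternatingWord
    (fun _ _ ↦ length_alternatingWord) n
  let blockEquiv := Composition.equivZeroStartWord _ bijOn_blockWord (fun _ ↦ length_blockWord) n
  refine ⟨runEquiv.symm.trans blockEquiv, fun r k hr w ↦ ?_⟩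
  obtain ⟨c, rfl⟩ := runEquiv.surjective w
  rw [Equiv.trans_apply, Equiv.symm_apply_apply]
  change runCount (alternatingWord false c.blocks) (r + 1) = k ↔
    oneRunCount (blockWord c.blocks) r = k
  rw [runCount_alternatingWord (fun _ ↦ c.blocks_pos), oneRunCount_blockWord (by omega)]
end
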